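/- arXiv:1709.07807 — 4 statements merged into one kernel-verified Lean document; each statement's English description precedes it below -/
import Mathlib

section
/- The conditioning action of type α is multiplicative over joint variables: for finite sets E_Y, E_Z, a probability law P on E_Y × E_Z, a measurable function f on laws, and α > 0, define (Y.f)(P) = Σ_y P(Y=y)^α f(P|_{Y=y}). Then (Z.(Y.f))(P) = Σ_{(y,z)} P(Y=y, Z=z)^α f(P|_{Y=y,Z=z}), i.e. Z.(Y.f) = (ZY).f. -/
variable {EY EZ : Type} [Fintype EY] [Fintype EZ] [DecidableEq EY] [DecidableEq EZ]

/-- Marginal law of `Y`. -/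
noncomputable def margY (P : EY × EZ → ℝ) (y : EY) : ℝ := ∑ z : EZ, P (y, z)

/-- Marginal law of `Z`. -/
noncomputable def margZ (P : EY × EZ → ℝ) (z : EZ) : ℝ := ∑ y : EY, P (y, z)

/-- The law conditioned on `Y = y`. -/
noncomputable def condY (P : EY × EZ → ℝ) (y : EY) : EY × EZ → ℝ :=
  fun p => (if p.1 = y then P p else 0) / margY P y

/-- The law conditioned on `Z = z`. -/
noncomputable def condZ (P : EY × EZ → ℝ) (z : EZ) : EY × EZ → ℝ :=
  fun p => (if p.2 = z then P p else 0) / margZ P z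

/-- The law conditioned on `Y = y, Z = z`. -/
noncomputable def condYZ (P : EY × EZ → ℝ) (q : EY × EZ) : EY × EZ → ℝ :=
  fun p => (if p = q then P p else 0) / P q

/-- The α-action of the variable `Y`: `(Y.f)(P) = Σ_{y : P(Y=y)>0} P(Y=y)^α f(P|_{Y=y})`. -/
noncomputable def actY (α : ℝ) (f : (EY × EZ → ℝ) → ℝ) (P : EY × EZ → ℝ) : ℝ :=
  ∑ y : EY, if 0 < margY P y then margY P y ^ α * f (condY P y) else 0

/-- The α-action of the variable `Z`. -/
noncomputable def actZ (α : ℝ) (f : (EY × EZ → ℝ) → ℝ) (P : EY × EZ → ℝ) : ℝ :=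
  ∑ z : EZ, if 0 < margZ P z then margZ P z ^ α * f (condZ P z) else 0

/-- The α-action of the joint variable `(Y,Z)`. -/
noncomputable def actYZ (α : ℝ) (f : (EY × EZ → ℝ) → ℝ) (P : EY × EZ → ℝ) : ℝ :=
  ∑ q : EY × EZ, if 0 < P q then P q ^ α * f (condYZ P q) else 0

lemma margY_condZ (P : EY × EZ → ℝ) (z : EZ) (y : EY) :
    margY (condZ P z) y = P (y, z) / margZ P z := by
  unfold margY condZ
  rw [← Finset.sum_div]
  congr 1
  simp

lemma condY_condZ (P : EY × EZ → ℝ) (y : EY) (z : EZ)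
    (hm : margZ P z ≠ 0) (hp : P (y, z) ≠ 0) :
    condY (condZ P z) y = condYZ P (y, z) := by
  funext p
  unfold condY condYZ
  rw [margY_condZ]
  unfold condZ
  obtain ⟨a, b⟩ := p
  simp only [Prod.mk.injEq]
  by_cases h1 : a = y <;> by_cases h2 : b = z <;>
    simp only [h1, h2, if_true, if_false, and_true, and_false, true_and, false_and,
      if_pos, zero_div] <;>
    first
      | (rw [div_div_div_cancel_right₀]; exact hm)
      | simp [h1, h2]

/-- The conditioning action is multiplicative over joint variables: `Z.(Y.f) = (ZY).f`. -/
theorem act_mul (α : ℝ) (hα : 0 < α)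
    (f : (EY × EZ → ℝ) → ℝ)
    (P : EY × EZ → ℝ) (hP0 : ∀ p, 0 ≤ P p) (hP1 : ∑ p : EY × EZ, P p = 1) :
    actZ α (actY α f) P = actYZ α f P := by
  unfold actZ actYZ
  rw [Fintype.sum_prod_type, Finset.sum_comm]
  apply Finset.sum_congr rfl
  intro z _
  by_cases hz : 0 < margZ P z
  · rw [if_pos hz]
    unfold actY
    rw [Finset.mul_sum]
    apply Finset.sum_congr rfl
    intro y _
    rw [margY_condZ]
    by_cases hp : 0 < P (y, z)
    · rw [if_pos (div_pos hp hz), if_pos hp, condY_condZ P y z hz.ne' hp.ne',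
        Real.div_rpow (hP0 _) hz.le]
      have hm : margZ P z ^ α ≠ 0 := (Real.rpow_pos_of_pos hz α).ne'
      field_simp
    · have h0 : P (y, z) = 0 := le_antisymm (not_lt.mp hp) (hP0 _)
      simp [h0]
  · rw [if_neg hz]
    symm
    apply Finset.sum_eq_zero
    intro y _
    have hm0 : margZ P z = 0 :=
      le_antisymm (not_lt.mp hz) (Finset.sum_nonneg fun y _ => hP0 _)
    have : P (y, z) = 0 := by
      have := (Finset.sum_eq_zero_iff_of_nonneg (fun y _ => hP0 (y, z))).mp hm0
      exact this y (Finset.mem_univ y)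
    simp [this]
end

section
/- Every measurable solution of the α-deformed fundamental equation is proportional to the binary Tsallis entropy: for α > 0, α ≠ 1, if u : [0,1] → ℝ is measurable, u(0) = u(1) = 0, and u(1−x) + (1−x)^α·u(y/(1−x)) = u(y) + (1−y)^α·u((1−x−y)/(1−y)) for all admissible x, y, then there is λ ∈ ℝ with u(p) = λ·(p^α + (1−p)^α − 1)/(1−α). -/
/-!
Put `F(p, q) = (p + q)^α u(p / (p + q)) − c (p^α + q^α − (p + q)^α)` for `p, q > 0`. The
fundamental equation says exactly that `F` is a 2-cocycle on the additive semigroup of positive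
reals, and `F` is homogeneous of degree `α`; the constant `c` is chosen so that `F` vanishes on
the diagonal. Since `2^α ≠ 2`, such a cocycle is antisymmetric, hence additive in its second
argument; being measurable, it is then linear there, and vanishing on the diagonal forces
`F = 0`. Reading off `F(p, 1 − p) = 0` gives `u = c (1 − α) s_α` on `(0, 1)`.
-/

open MeasureTheory

lemma eq_mul_of_measurable_of_add_pos {f : ℝ → ℝ} (hf : Measurable f)
    (hadd : ∀ a b, 0 < a → 0 < b → f (a + b) = f a + f b) {x : ℝ} (hx : 0 < x) :
    f x = x * f 1 := by
  -- `f (x + s) - f s` does not depend on the shift `s`, which gives an additive extension `g`.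
  have shift : ∀ x s t, 0 < s → 0 < t → 0 < x + s → 0 < x + t →
      f (x + s) - f s = f (x + t) - f t := by
    intro x s t hs ht hxs hxt
    have h₁ := hadd (x + s) t hxs ht
    have h₂ := hadd (x + t) s hxt hs
    rw [add_right_comm] at h₂
    linarith
  have hpos : ∀ x : ℝ, 0 < x + (|x| + 1) := fun x => by linarith [neg_abs_le x]
  let g : ℝ →+ ℝ :=
    AddMonoidHom.mk' (fun x => f (x + (|x| + 1)) - f (|x| + 1)) fun x y => by
      have hs : 0 < (|x| + 1) + (|y| + 1) := by positivity
      rw [shift (x + y) _ _ (by positivity) hs (hpos _) (by linarith [hpos x, hpos y]),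
        show x + y + ((|x| + 1) + (|y| + 1)) = (x + (|x| + 1)) + (y + (|y| + 1)) by ring,
        hadd _ _ (hpos x) (hpos y), hadd (|x| + 1) (|y| + 1) (by positivity) (by positivity)]
      ring
  have hg : ∀ x, 0 < x → g x = f x := fun x hx => by
    simp only [g, AddMonoidHom.mk'_apply, hadd x _ hx (by positivity : 0 < |x| + 1)]
    ring
  have hg_cont : Continuous g := Measure.AddMonoidHom.continuous_of_measurable g (by
    change Measurable fun x => f (x + (|x| + 1)) - f (|x| + 1)
    fun_prop)
  have := map_real_smul g hg_cont x 1
  rwa [smul_eq_mul, smul_eq_mul, mul_one, hg x hx, hg 1 one_pos] at this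

def IsCocycleOnPos (F : ℝ → ℝ → ℝ) : Prop :=
  ∀ p q r, 0 < p → 0 < q → 0 < r → F p q + F (p + q) r = F q r + F p (q + r)

namespace IsCocycleOnPos

variable {F : ℝ → ℝ → ℝ}

lemma antisymm (hF : IsCocycleOnPos F) (hdiag : ∀ x, 0 < x → F x x = 0) {k : ℝ} (hk : k ≠ 2)
    (hhom : ∀ p q, 0 < p → 0 < q → F (2 * p) (2 * q) = k * F p q)
    {x y : ℝ} (hx : 0 < x) (hy : 0 < y) :
    F x y + F y x = 0 := by
  have hxy : 0 < x + y := by linarith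
  have i₁ := hF x y (x + y) hx hy hxy
  have i₂ := hF (x + y) y x hxy hy hx
  have i₃ := hF x y y hx hy hy
  have i₄ := hF x x (2 * y) hx hx (by linarith)
  have i₅ := hF y y x hy hy hx
  have i₆ := hF (2 * y) x x (by linarith) hx hx
  rw [hdiag (x + y) hxy, show y + (x + y) = x + 2 * y by ring] at i₁
  rw [show x + y + y = x + 2 * y by ring, add_comm y x, hdiag (x + y) hxy] at i₂
  rw [hdiag y hy, ← two_mul] at i₃
  rw [hdiag x hx, ← two_mul, hhom x y hx hy] at i₄
  rw [hdiag y hy, ← two_mul, add_comm y x] at i₅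
  rw [hdiag x hx, add_comm (2 * y) x, ← two_mul, hhom y x hy hx] at i₆
  have key : (k - 2) * (F x y + F y x) = 0 := by
    linear_combination i₄ - i₃ - i₁ + i₅ - i₆ + i₂
  exact (mul_eq_zero.mp key).resolve_left (sub_ne_zero.mpr hk)

lemma add_right (hF : IsCocycleOnPos F) (hanti : ∀ x y, 0 < x → 0 < y → F x y + F y x = 0)
    {a b d : ℝ} (ha : 0 < a) (hb : 0 < b) (hd : 0 < d) :
    F a (b + d) = F a b + F a d := by
  -- The cocycle identity and antisymmetry make the defect `F a (b + d) - F a b - F a d`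
  -- change sign under every cyclic shift of `(a, b, d)`.
  have defect : ∀ a b d, 0 < a → 0 < b → 0 < d →
      F a (b + d) - F a b - F a d = -(F d (a + b) - F d a - F d b) := by
    intro a b d ha hb hd
    linarith [hF a b d ha hb hd, hanti (a + b) d (by linarith) hd, hanti a d ha hd,
      hanti b d hb hd]
  linarith [defect a b d ha hb hd, defect d a b hd ha hb, defect b d a hb hd ha]

theorem eq_zero (hF : IsCocycleOnPos F) (hdiag : ∀ x, 0 < x → F x x = 0)
    {k : ℝ} (hk : k ≠ 2)
    (hhom : ∀ p q, 0 < p → 0 < q → F (2 * p) (2 * q) = k * F p q)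
    (hmeas : ∀ p, Measurable (F p)) {p q : ℝ} (hp : 0 < p) (hq : 0 < q) :
    F p q = 0 := by
  have hanti : ∀ x y, 0 < x → 0 < y → F x y + F y x = 0 :=
    fun x y hx hy => hF.antisymm hdiag hk hhom hx hy
  have hlin : ∀ p q, 0 < p → 0 < q → F p q = q * F p 1 := fun p q hp hq =>
    eq_mul_of_measurable_of_add_pos (hmeas p) (fun _ _ => hF.add_right hanti hp) hq
  have h1p : F 1 p = 0 := by rw [hlin 1 p one_pos hp, hdiag 1 one_pos, mul_zero]
  have hp1 : F p 1 = 0 := by linarith [hanti 1 p one_pos hp]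
  rw [hlin p q hp hq, hp1, mul_zero]

end IsCocycleOnPos

noncomputable def tsallisCocycle (α c : ℝ) (u : ℝ → ℝ) (p q : ℝ) : ℝ :=
  (p + q) ^ α * u (p / (p + q)) - c * (p ^ α + q ^ α - (p + q) ^ α)

section TsallisCocycle

variable {α : ℝ} {u : ℝ → ℝ}

lemma isCocycleOnPos_tsallisCocycle (c : ℝ)
    (heq : ∀ x y : ℝ, 0 ≤ x → x < 1 → 0 ≤ y → y < 1 → x + y ≤ 1 →
      u (1 - x) + (1 - x) ^ α * u (y / (1 - x))
        = u y + (1 - y) ^ α * u ((1 - x - y) / (1 - y))) :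
    IsCocycleOnPos (tsallisCocycle α c u) := by
  intro p q r hp hq hr
  set T := p + q + r
  have hT : 0 < T := by positivity
  -- the fundamental equation at `x = r / T`, `y = p / T`, multiplied by `T ^ α`
  have key := heq (r / T) (p / T) (by positivity) ((div_lt_one hT).2 (by linarith))
    (by positivity) ((div_lt_one hT).2 (by linarith))
    (by rw [← add_div, div_le_one hT]; linarith)
  have e₁ : 1 - r / T = (p + q) / T := by field_simp; ring
  have e₂ : 1 - p / T = (q + r) / T := by field_simp; ring
  rw [e₁, e₂, div_div_div_cancel_right₀ hT.ne', ← sub_div, add_sub_cancel_left,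
    div_div_div_cancel_right₀ hT.ne', Real.div_rpow (by positivity) hT.le,
    Real.div_rpow (by positivity) hT.le] at key
  field_simp at key
  simp only [tsallisCocycle]
  rw [show p + (q + r) = T by ring, show p + q + r = T from rfl]
  linear_combination key

lemma tsallisCocycle_self (c : ℝ) {x : ℝ} (hx : 0 < x) :
    tsallisCocycle α c u x x = x ^ α * (2 ^ α * u (1 / 2) - c * (2 - 2 ^ α)) := by
  rw [tsallisCocycle, ← two_mul, div_mul_cancel_right₀ hx.ne', ← one_div,
    Real.mul_rpow zero_le_two hx.le]
  ring

lemma tsallisCocycle_two_mul (c : ℝ) {p q : ℝ} (hp : 0 ≤ p) (hq : 0 ≤ q) :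
    tsallisCocycle α c u (2 * p) (2 * q) = 2 ^ α * tsallisCocycle α c u p q := by
  rw [tsallisCocycle, tsallisCocycle, ← mul_add, mul_div_mul_left _ _ two_ne_zero,
    Real.mul_rpow zero_le_two hp, Real.mul_rpow zero_le_two hq,
    Real.mul_rpow zero_le_two (add_nonneg hp hq)]
  ring

lemma tsallisCocycle_sub_left (c p : ℝ) :
    tsallisCocycle α c u p (1 - p) = u p - c * (p ^ α + (1 - p) ^ α - 1) := by
  simp only [tsallisCocycle, add_sub_cancel, Real.one_rpow, div_one, one_mul]

lemma measurable_tsallisCocycle (hu : Measurable u) (c p : ℝ) :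
    Measurable (tsallisCocycle α c u p) := by
  unfold tsallisCocycle
  fun_prop

end TsallisCocycle

/-- Every measurable solution of the α-deformed fundamental equation of information
theory is a multiple of the binary Tsallis entropy `s_α(p) = (p^α + (1−p)^α − 1)/(1−α)`. -/
theorem fundamental_equation_tsallis
    (α : ℝ) (hα : 0 < α) (hα1 : α ≠ 1)
    (u : ℝ → ℝ) (hu : Measurable u)
    (h0 : u 0 = 0) (h1 : u 1 = 0)
    (heq : ∀ x y : ℝ, 0 ≤ x → x < 1 → 0 ≤ y → y < 1 → x + y ≤ 1 →
      u (1 - x) + (1 - x) ^ α * u (y / (1 - x))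
        = u y + (1 - y) ^ α * u ((1 - x - y) / (1 - y))) :
    ∃ lam : ℝ, ∀ p : ℝ, 0 ≤ p → p ≤ 1 →
      u p = lam * ((p ^ α + (1 - p) ^ α - 1) / (1 - α)) := by
  have h2α : (2 : ℝ) ^ α ≠ 2 := fun h =>
    hα1 ((Real.rpow_right_inj two_pos (by norm_num)).1 (h.trans (Real.rpow_one 2).symm))
  set c := 2 ^ α * u (1 / 2) / (2 - 2 ^ α)
  have hc : 2 ^ α * u (1 / 2) - c * (2 - 2 ^ α) = 0 := by
    rw [div_mul_cancel₀ _ (sub_ne_zero.2 h2α.symm), sub_self]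
  have hzero : ∀ p q, 0 < p → 0 < q → tsallisCocycle α c u p q = 0 := fun p q hp hq =>
    (isCocycleOnPos_tsallisCocycle c heq).eq_zero
      (fun x hx => by rw [tsallisCocycle_self c hx, hc, mul_zero]) h2α
      (fun p q hp hq => tsallisCocycle_two_mul c hp.le hq.le) (measurable_tsallisCocycle hu c)
      hp hq
  refine ⟨c * (1 - α), fun p hp0 hp1 => ?_⟩
  rw [mul_assoc, mul_div_cancel₀ _ (sub_ne_zero.2 hα1.symm)]
  rcases hp0.eq_or_lt with rfl | hp0
  · simp [h0, Real.zero_rpow hα.ne']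
  rcases hp1.eq_or_lt with rfl | hp1
  · simp [h1, Real.zero_rpow hα.ne']
  have := hzero p (1 - p) hp0 (sub_pos.2 hp1)
  rwa [tsallisCocycle_sub_left, sub_eq_zero] at this
end

section
/- Any solution u of the functional equation u(1−x) + (1−x)^α u(y/(1−x)) = u(y) + (1−y)^α u((1−x−y)/(1−y)) with u(0) = u(1) = 0 satisfies the symmetry u(x) = u(1−x) for all rational x ∈ [0,1]. -/
lemma nat_coprime_sub_right {p d : ℕ} (h : p ≤ d) (hc : Nat.Coprime p d) :
    Nat.Coprime (d - p) d := by
  have h2 : Nat.Coprime (d - p) p := (Nat.coprime_sub_self_left h).mpr hc.symm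
  have hd : d = p + (d - p) := by omega
  have h3 := Nat.coprime_add_self_right.mpr h2
  rwa [← hd] at h3

lemma rat_num_eq (q : ℚ) : (q.num : ℚ) = q * q.den := by
  have hd : ((q.den : ℚ)) ≠ 0 := by exact_mod_cast q.den_nz
  exact (div_eq_iff hd).mp (Rat.num_div_den q)

lemma rat_num_lt_den (q : ℚ) (h1 : q < 1) : q.num < (q.den : ℤ) := by
  have hq := rat_num_eq q
  have hdenpos : (0:ℚ) < q.den := by exact_mod_cast q.pos
  have : (q.num : ℚ) < (q.den : ℚ) := by nlinarith
  exact_mod_cast this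

/-- Key denominator lemma: for `0 < q < 1`, `q/(1-q)` has denominator `q.den - q.num`. -/
lemma den_div_one_sub (q : ℚ) (h0 : 0 < q) (h1 : q < 1) :
    ((q / (1 - q)).den : ℤ) = (q.den : ℤ) - q.num := by
  have hq := rat_num_eq q
  have hlt := rat_num_lt_den q h1
  have hnum : 0 < q.num := Rat.num_pos.mpr h0
  have hb0 : 0 < (q.den : ℤ) - q.num := by omega
  have h1q : (1:ℚ) - q ≠ 0 := sub_ne_zero.mpr (ne_of_lt h1).symm
  have hbn : (((q.den : ℤ) - q.num : ℤ) : ℚ) ≠ 0 := by exact_mod_cast hb0.ne'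
  have hrep : q / (1 - q) = (q.num : ℚ) / (((q.den : ℤ) - q.num : ℤ) : ℚ) := by
    rw [div_eq_div_iff h1q hbn]
    push_cast
    linear_combination -hq
  rw [hrep]
  apply Rat.den_div_eq_of_coprime hb0
  have hple : q.num.natAbs ≤ q.den := by omega
  have hE : ((q.den : ℤ) - q.num).natAbs = q.den - q.num.natAbs := by omega
  rw [hE]
  exact (Nat.coprime_sub_self_right hple).mpr q.reduced

/-- For `0 < q < 1`, `1 - q` has the same denominator as `q`. -/
lemma den_one_sub (q : ℚ) (h0 : 0 < q) (h1 : q < 1) : ((1 - q).den : ℤ) = (q.den : ℤ) := by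
  have hq := rat_num_eq q
  have hlt := rat_num_lt_den q h1
  have hnum : 0 < q.num := Rat.num_pos.mpr h0
  have hd : ((q.den : ℚ)) ≠ 0 := by exact_mod_cast q.den_nz
  have hrep : 1 - q = (((q.den : ℤ) - q.num : ℤ) : ℚ) / (((q.den : ℤ) : ℤ) : ℚ) := by
    rw [eq_div_iff (by exact_mod_cast q.den_nz)]
    push_cast
    linear_combination hq
  rw [hrep]
  apply Rat.den_div_eq_of_coprime (by exact_mod_cast q.pos)
  have hple : q.num.natAbs ≤ q.den := by omega
  have hE : ((q.den : ℤ) - q.num).natAbs = q.den - q.num.natAbs := by omega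
  have hE2 : ((q.den : ℤ) : ℤ).natAbs = q.den := Int.natAbs_natCast _
  rw [hE, hE2]
  exact nat_coprime_sub_right hple q.reduced

/-- Any solution of the α-deformed fundamental equation of information theory
satisfies the symmetry `u(x) = u(1−x)` at every rational point of `[0,1]`. -/
theorem fundamental_equation_symmetry
    (α : ℝ) (hα : 0 < α)
    (u : ℝ → ℝ)
    (h0 : u 0 = 0) (h1 : u 1 = 0)
    (heq : ∀ x y : ℝ, 0 ≤ x → x < 1 → 0 ≤ y → y < 1 → x + y ≤ 1 →
      u (1 - x) + (1 - x) ^ α * u (y / (1 - x))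
        = u y + (1 - y) ^ α * u ((1 - x - y) / (1 - y))) :
    ∀ q : ℚ, 0 ≤ q → q ≤ 1 → u (q : ℝ) = u (1 - (q : ℝ)) := by
  -- Key real identity from the functional equation with x = y.
  have key : ∀ x : ℝ, 0 ≤ x → x ≤ 1/2 →
      u (1 - x) - u x = (1 - x) ^ α * (u (1 - x / (1 - x)) - u (x / (1 - x))) := by
    intro x hx0 hx2
    have hx1 : x < 1 := by linarith
    have hne : (1 : ℝ) - x ≠ 0 := by intro h; nlinarith
    have h := heq x x hx0 hx1 hx0 hx1 (by linarith)
    have e : (1 - x - x) / (1 - x) = 1 - x / (1 - x) := by field_simp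
    rw [e] at h
    linear_combination h
  suffices H : ∀ n : ℕ, ∀ q : ℚ, q.den ≤ n → 0 ≤ q → q ≤ 1 → u (q : ℝ) = u (1 - (q : ℝ)) by
    intro q hq0 hq1; exact H q.den q le_rfl hq0 hq1
  intro n
  induction n with
  | zero => intro q hden; exact absurd hden (by have := q.den_pos; omega)
  | succ n ih =>
    have claim : ∀ q : ℚ, q.den ≤ n + 1 → 0 ≤ q → q ≤ 1/2 → u (q : ℝ) = u (1 - (q : ℝ)) := by
      intro q hden hq0 hq2
      rcases eq_or_lt_of_le hq0 with h | h
      · rw [← h]; push_cast; simp [h0, h1]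
      · have hq1 : q < 1 := lt_of_le_of_lt hq2 (by norm_num)
        set q' := q / (1 - q) with hq'
        have hnum : 0 < q.num := Rat.num_pos.mpr h
        have hden' : ((q'.den : ℤ)) = (q.den : ℤ) - q.num := den_div_one_sub q h hq1
        have hq'den : q'.den ≤ n := by omega
        have h1q : (0:ℚ) < 1 - q := by linarith
        have hq'0 : 0 ≤ q' := le_of_lt (div_pos h h1q)
        have hq'1 : q' ≤ 1 := by rw [hq', div_le_one h1q]; linarith
        have ihq := ih q' hq'den hq'0 hq'1
        have hcast : ((q' : ℚ) : ℝ) = (q : ℝ) / (1 - (q : ℝ)) := by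
          rw [hq']; push_cast; ring
        have hq2' : (q : ℝ) ≤ 1/2 := by
          have h' := (Rat.cast_le (K := ℝ)).mpr hq2
          push_cast at h'
          linarith
        have hk := key (q : ℝ) (by exact_mod_cast hq0) hq2'
        rw [← hcast, ihq] at hk
        have hpow : (0:ℝ) < (1 - (q:ℝ)) ^ α := by
          apply Real.rpow_pos_of_pos
          have : ((0:ℚ):ℝ) < ((1 - q : ℚ) : ℝ) := by exact_mod_cast h1q
          push_cast at this; linarith
        linarith [hk]
    intro q hden hq0 hq1
    rcases le_or_gt q (1/2) with hle | hlt
    · exact claim q hden hq0 hle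
    · have h01 : 0 < q := lt_of_le_of_lt (by norm_num) hlt
      have hq1' : (1 - q).den ≤ n + 1 := by
        rcases eq_or_lt_of_le hq1 with h | h
        · rw [← h]; simp
        · have := den_one_sub q h01 h
          omega
      have hhalf : 1 - q ≤ 1/2 := by linarith
      have := claim (1 - q) hq1' (by linarith) hhalf
      have e : ((1 - q : ℚ) : ℝ) = 1 - (q : ℝ) := by push_cast; ring
      rw [e] at this
      rw [this]; ring_nf
end

section
/- If a periodic function h : ℝ → ℝ with period 1 satisfies h(x) = |x|^α h((2x−1)/x) and h(x) = −|x|^α h((1−x)/x) for all x ≠ 0, together with h(0) = 0, then h vanishes at every rational number in [0,1]. -/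
/-!
By periodicity `h q = h (fract q)`, and for `0 < f < 1` the equation `h f = -|f|^α h((1 - f)/f)`
relates `h f` to the value of `h` at `(1 - f)/f = f⁻¹ - 1`, whose denominator is the numerator of
`f`, hence smaller than that of `f`. This is the Euclidean algorithm on `(num, den)`, and strong
induction on the denominator brings every rational down to `h 0 = 0`.
-/

open Function

theorem Rat.den_inv_sub_one_lt {q : ℚ} (hq0 : 0 < q) (hq1 : q < 1) : (q⁻¹ - 1).den < q.den := by
  rw [← Int.cast_one, Rat.sub_intCast_den, Rat.den_inv_of_ne_zero hq0.ne']
  have hnum_lt := Rat.num_lt_denom_iff.mpr hq1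
  have hnum_pos := Rat.num_pos.mpr hq0
  omega

theorem Function.Periodic.apply_ratCast_eq_zero_of_eq_mul_comp {h c : ℝ → ℝ} (hper : Periodic h 1)
    (h0 : h 0 = 0) (hfe : ∀ x : ℝ, x ≠ 0 → h x = c x * h ((1 - x) / x)) (q : ℚ) :
    h q = 0 := by
  induction hn : q.den using Nat.strong_induction_on generalizing q with
  | _ n ih =>
    have hfract : h q = h (Int.fract q : ℚ) := by
      rw [Int.fract, Rat.cast_sub, Rat.cast_intCast, ← mul_one ((⌊q⌋ : ℤ) : ℝ),
        hper.sub_int_mul_eq]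
    rw [hfract]
    set f := Int.fract q
    obtain hf0 | hf0 : 0 = f ∨ 0 < f := (Int.fract_nonneg q).eq_or_lt
    · rw [← hf0, Rat.cast_zero, h0]
    have hfR : (f : ℝ) ≠ 0 := by exact_mod_cast hf0.ne'
    have hquot : (1 - (f : ℝ)) / f = ((f⁻¹ - 1 : ℚ) : ℝ) := by
      push_cast
      field_simp
    have hden : (f⁻¹ - 1).den < n :=
      hn ▸ Rat.den_intFract q ▸ Rat.den_inv_sub_one_lt hf0 (Int.fract_lt_one q)
    rw [hfe _ hfR, hquot, ih _ hden _ rfl, mul_zero]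

theorem periodic_functional_eq_vanishes_on_rationals_general
    (α : ℝ)
    (h : ℝ → ℝ)
    (hper : ∀ x : ℝ, h (x + 1) = h x)
    (h0 : h 0 = 0)
    (heq2 : ∀ x : ℝ, x ≠ 0 → h x = -(|x| ^ α) * h ((1 - x) / x)) :
    ∀ q : ℚ, 0 ≤ q → q ≤ 1 → h (q : ℝ) = 0 :=
  fun q _ _ => Periodic.apply_ratCast_eq_zero_of_eq_mul_comp hper h0 heq2 q

/-- If a 1-periodic function `h` with `h(0) = 0` satisfies
`h(x) = |x|^α h((2x−1)/x)` and `h(x) = −|x|^α h((1−x)/x)` for all `x ≠ 0`,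
then `h` vanishes at every rational point of `[0,1]`. -/
theorem periodic_functional_eq_vanishes_on_rationals
    (α : ℝ) (hα : 0 < α)
    (h : ℝ → ℝ)
    (hper : ∀ x : ℝ, h (x + 1) = h x)
    (h0 : h 0 = 0)
    (heq1 : ∀ x : ℝ, x ≠ 0 → h x = |x| ^ α * h ((2 * x - 1) / x))
    (heq2 : ∀ x : ℝ, x ≠ 0 → h x = -(|x| ^ α) * h ((1 - x) / x)) :
    ∀ q : ℚ, 0 ≤ q → q ≤ 1 → h (q : ℝ) = 0 :=
  periodic_functional_eq_vanishes_on_rationals_general α h hper h0 heq2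
end
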